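/- Let α : G → F be a surjective group homomorphism, H ≤ F a subgroup of finite index m in F, and set H̄ := α⁻¹(H) ≤ G. Choose coset representatives f₀, …, f_{m−1} of F/H and elements g₀, …, g_{m−1} ∈ G with α(g_j) = f_j for all j. Then: (a) g₀, …, g_{m−1} is a complete set of representatives for the left cosets G/H̄, so H̄ has index m in G; and (b) for every group homomorphism ρ : H → GL(n, ℤ), the homomorphism ind_{H}^{F}(ρ) ∘ α : G → GL(m·n, ℤ) (induction computed with the representatives f_j) is equal to ind_{H̄}^{G}(ρ ∘ α|_{H̄}) (induction computed with the representatives g_j), where α|_{H̄} : H̄ → H is the restriction of α. In other words, restriction along α of the induced representation equals the induction from H̄ of the restriction. -/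

import Mathlib

open scoped Classical

/-- The induced representation matrix: for a subgroup `L` of `K` with coset
representatives `rep : Fin m → K` and a matrix-valued function `ρ` on `L`, the matrix
`(ind ρ)(x)`, indexed by pairs `(j, i)`, whose `((j,i),(j',i'))` entry is
`ρ(rep j⁻¹ * x * rep j')_{i,i'}` if `x * rep j' * L = rep j * L` and `0` otherwise. -/
noncomputable def indMat {K : Type*} [Group K] (L : Subgroup K) {m n : ℕ} (rep : Fin m → K)
    (ρ : L → Matrix (Fin n) (Fin n) ℤ) (x : K) :
    Matrix (Fin m × Fin n) (Fin m × Fin n) ℤ := fun p q =>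
  if h : ((x * rep q.1 : K) : K ⧸ L) = ((rep p.1 : K) : K ⧸ L) then
    ρ ⟨(rep p.1)⁻¹ * x * rep q.1,
        by rw [mul_assoc]; exact QuotientGroup.eq.mp h.symm⟩ p.2 q.2
  else 0

theorem QuotientGroup.mk_eq_mk_comap_iff {G F : Type*} [Group G] [Group F] (α : G →* F)
    (H : Subgroup F) (a b : G) :
    ((a : G) : G ⧸ H.comap α) = ((b : G) : G ⧸ H.comap α) ↔
      ((α a : F) : F ⧸ H) = ((α b : F) : F ⧸ H) := by
  rw [QuotientGroup.eq, QuotientGroup.eq, Subgroup.mem_comap, map_mul, map_inv]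

theorem existsUnique_mk_comap_eq {G F : Type*} [Group G] [Group F] (α : G →* F)
    (H : Subgroup F) {ι : Type*} (f : ι → F)
    (hf : ∀ b : F, ∃! k : ι, ((b : F) : F ⧸ H) = ((f k : F) : F ⧸ H))
    (g : ι → G) (hg : ∀ k, α (g k) = f k) (a : G) :
    ∃! k : ι, ((a : G) : G ⧸ H.comap α) = ((g k : G) : G ⧸ H.comap α) := by
  simpa only [QuotientGroup.mk_eq_mk_comap_iff, hg] using hf (α a)

theorem Subgroup.index_eq_card_of_existsUnique {G : Type*} [Group G] (L : Subgroup G)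
    {ι : Type*} (rep : ι → G)
    (hrep : ∀ a : G, ∃! k : ι, ((a : G) : G ⧸ L) = ((rep k : G) : G ⧸ L)) :
    L.index = Nat.card ι := by
  have hbij : Function.Bijective (fun k : ι => ((rep k : G) : G ⧸ L)) := by
    refine Function.bijective_iff_existsUnique _ |>.mpr fun q => ?_
    induction q using QuotientGroup.induction_on with
    | H a => simpa only [eq_comm] using hrep a
  exact (Nat.card_eq_of_bijective _ hbij).symm

theorem indMat_map_eq_indMat_comap {G F : Type*} [Group G] [Group F] (α : G →* F)
    (H : Subgroup F) {m n : ℕ} (f : Fin m → F) (g : Fin m → G) (hg : ∀ j, α (g j) = f j)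
    (ρ : H → Matrix (Fin n) (Fin n) ℤ) (x : G) :
    indMat H f ρ (α x) =
      indMat (H.comap α) g (fun y => ρ ⟨α (y : G), Subgroup.mem_comap.mp y.2⟩) x := by
  ext p q
  have hcoset := QuotientGroup.mk_eq_mk_comap_iff α H (x * g q.1) (g p.1)
  rw [map_mul, hg, hg] at hcoset
  have harg : (f p.1)⁻¹ * α x * f q.1 = α ((g p.1)⁻¹ * x * g q.1) := by
    simp only [map_mul, map_inv, hg]
  by_cases h : ((α x * f q.1 : F) : F ⧸ H) = ((f p.1 : F) : F ⧸ H)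
  · simp only [indMat, dif_pos h, dif_pos (hcoset.mpr h), harg]
  · simp only [indMat, dif_neg h, dif_neg (mt hcoset.mp h)]

theorem indMat_res_of_surjective_general
    {G F : Type*} [Group G] [Group F] (α : G →* F)
    (H : Subgroup F) {m : ℕ} (f : Fin m → F)
    (hf : ∀ b : F, ∃! k : Fin m, ((b : F) : F ⧸ H) = ((f k : F) : F ⧸ H))
    (g : Fin m → G) (hg : ∀ j : Fin m, α (g j) = f j) :
    ((∀ a : G, ∃! k : Fin m,
        ((a : G) : G ⧸ H.comap α) = ((g k : G) : G ⧸ H.comap α)) ∧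
      (H.comap α).index = m) ∧
    (∀ (n : ℕ) (ρ : H →* Matrix.GeneralLinearGroup (Fin n) ℤ) (x : G),
      indMat H f (fun h => (ρ h : Matrix (Fin n) (Fin n) ℤ)) (α x) =
        indMat (H.comap α) g
          (fun y => (ρ ⟨α (y : G), Subgroup.mem_comap.mp y.2⟩ : Matrix (Fin n) (Fin n) ℤ))
          x) := by
  have hrep := existsUnique_mk_comap_eq α H f hf g hg
  refine ⟨⟨hrep, ?_⟩, fun n ρ x => indMat_map_eq_indMat_comap α H f g hg _ x⟩
  rw [Subgroup.index_eq_card_of_existsUnique _ g hrep, Nat.card_fin]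

/-- Let `α : G → F` be a surjective homomorphism, `H ≤ F` of finite index `m` with coset
representatives `f₀, …, f_{m−1}`, and `g₀, …, g_{m−1} ∈ G` with `α(g_j) = f_j`.  Then
(a) the `g_j` form a complete set of representatives of `G/H̄` where `H̄ = α⁻¹(H)`, so `H̄`
has index `m` in `G`; and (b) for every `ρ : H → GL(n, ℤ)`, restriction along `α` of the
induced representation equals the induction from `H̄` of the restriction of `ρ`:
`ind_H^F(ρ) ∘ α = ind_{H̄}^G(ρ ∘ α|_{H̄})`. -/
theorem indMat_res_of_surjective
    {G F : Type*} [Group G] [Group F] (α : G →* F) (hα : Function.Surjective α)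
    (H : Subgroup F) {m : ℕ} (f : Fin m → F)
    (hf : ∀ b : F, ∃! k : Fin m, ((b : F) : F ⧸ H) = ((f k : F) : F ⧸ H))
    (g : Fin m → G) (hg : ∀ j : Fin m, α (g j) = f j) :
    ((∀ a : G, ∃! k : Fin m,
        ((a : G) : G ⧸ H.comap α) = ((g k : G) : G ⧸ H.comap α)) ∧
      (H.comap α).index = m) ∧
    (∀ (n : ℕ) (ρ : H →* Matrix.GeneralLinearGroup (Fin n) ℤ) (x : G),
      indMat H f (fun h => (ρ h : Matrix (Fin n) (Fin n) ℤ)) (α x) =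
        indMat (H.comap α) g
          (fun y => (ρ ⟨α (y : G), Subgroup.mem_comap.mp y.2⟩ : Matrix (Fin n) (Fin n) ℤ))
          x) :=
  indMat_res_of_surjective_general α H f hf g hg
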